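/- Let |ψ₀⟩ = √p|0⟩ + √(1−p)|1⟩ with p ∈ (0,1), and let |ψ₁⟩ = |0⟩ or |ψ₁⟩ = |1⟩. Set ρ₀ = |ψ₀⟩⟨ψ₀| and ρ₁ = |ψ₁⟩⟨ψ₁|. Then for any ε ∈ (0,1) there exists n_ε such that for all n ≥ n_ε, inf{ Tr(Z[ρ₁^{⊗n}] E) : E Hermitian on (ℂ²)^{⊗n}, 0 ≤ E ≤ I, Tr(Z[ρ₀^{⊗n}] E) ≥ 1−ε } = 0. -/

import Mathlib

open Matrix Complex Set Filter

noncomputable section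

/-- Number of 1s in a bit string. -/
def ones {n : ℕ} (x : Fin n → Fin 2) : ℕ := (Finset.univ.filter fun i => x i = 1).card

/-- The `n`-fold tensor power of a one-qubit operator, as a matrix indexed by bit strings. -/
def mpow (n : ℕ) (ρ : Matrix (Fin 2) (Fin 2) ℂ) :
    Matrix (Fin n → Fin 2) (Fin n → Fin 2) ℂ :=
  Matrix.of fun x y => ∏ i, ρ (x i) (y i)

/-- The parity operator ω = σ_z^{⊗n}: it multiplies a computational basis vector by
(-1)^(number of 1s). -/
def parityOp (n : ℕ) : Matrix (Fin n → Fin 2) (Fin n → Fin 2) ℂ :=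
  Matrix.diagonal fun x => (-1 : ℂ) ^ ones x

/-- The ℤ₂-twirling Z[X] = ½ (X + ωXω). -/
def twirl {n : ℕ} (X : Matrix (Fin n → Fin 2) (Fin n → Fin 2) ℂ) :
    Matrix (Fin n → Fin 2) (Fin n → Fin 2) ℂ :=
  (2 : ℂ)⁻¹ • (X + parityOp n * X * parityOp n)

/-- Rank-one projection |ψ⟩⟨ψ| on one qubit. -/
def projv (ψ : Fin 2 → ℂ) : Matrix (Fin 2) (Fin 2) ℂ := vecMulVec ψ (star ψ)

/-- Rank-one projection |ψ⟩⟨ψ| on n qubits. -/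
def projN {n : ℕ} (ψ : (Fin n → Fin 2) → ℂ) :
    Matrix (Fin n → Fin 2) (Fin n → Fin 2) ℂ := vecMulVec ψ (star ψ)

def ket0 : Fin 2 → ℂ := ![1, 0]

def ket1 : Fin 2 → ℂ := ![0, 1]

/-- The qubit state √p |0⟩ + e^{iφ} √(1-p) |1⟩. -/
def qubit (p φ : ℝ) : Fin 2 → ℂ :=
  ![(Real.sqrt p : ℂ), Complex.exp (Complex.I * φ) * (Real.sqrt (1 - p) : ℂ)]

/-- The qubit state √p |0⟩ + √(1-p) |1⟩. -/
def qubitR (p : ℝ) : Fin 2 → ℂ := ![(Real.sqrt p : ℂ), (Real.sqrt (1 - p) : ℂ)]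

open scoped ComplexOrder

/-- The set of type-II error probabilities Tr(σ₁ E) over POVM elements 0 ≤ E ≤ I
(Loewner order) whose type-I error is at most ε, i.e. Tr(σ₀ E) ≥ 1-ε. -/
def errSet (n : ℕ) (σ0 σ1 : Matrix (Fin n → Fin 2) (Fin n → Fin 2) ℂ) (ε : ℝ) : Set ℝ :=
  { x | ∃ E : Matrix (Fin n → Fin 2) (Fin n → Fin 2) ℂ,
      E.IsHermitian ∧ E.PosSemidef ∧ (1 - E).PosSemidef ∧
      1 - ε ≤ ((σ0 * E).trace).re ∧ x = ((σ1 * E).trace).re }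

/-! Since `|ψ₁⟩^{⊗n} = |v…v⟩` is a computational basis vector, `Z[ρ₁^{⊗n}] = |v…v⟩⟨v…v|`, and the
projection `E = 1 - |v…v⟩⟨v…v|` has type-II error `0`, the least possible value. Twirling does not
change diagonal entries, so the type-I success probability of `E` is `1 - ⟨v|ρ₀|v⟩ⁿ`, which tends
to `1` because `⟨v|ρ₀|v⟩ ∈ {p, 1 - p} ⊆ (0, 1)`. -/

lemma twirl_apply {n : ℕ} (X : Matrix (Fin n → Fin 2) (Fin n → Fin 2) ℂ) (x y : Fin n → Fin 2) :
    twirl X x y = (1 + (-1 : ℂ) ^ (ones x + ones y)) / 2 * X x y := by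
  simp only [twirl, parityOp, Matrix.smul_apply, Matrix.add_apply, mul_diagonal, diagonal_mul,
    pow_add]
  ring

lemma twirl_apply_self {n : ℕ} (X : Matrix (Fin n → Fin 2) (Fin n → Fin 2) ℂ)
    (x : Fin n → Fin 2) : twirl X x x = X x x := by
  rw [twirl_apply, ← two_mul, (even_two_mul (ones x)).neg_one_pow]
  ring

lemma trace_twirl {n : ℕ} (X : Matrix (Fin n → Fin 2) (Fin n → Fin 2) ℂ) :
    (twirl X).trace = X.trace :=
  Finset.sum_congr rfl fun x _ => twirl_apply_self X x

lemma twirl_diagonal {n : ℕ} (d : (Fin n → Fin 2) → ℂ) : twirl (diagonal d) = diagonal d := by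
  ext x y
  by_cases h : x = y
  · subst h; exact twirl_apply_self _ x
  · simp [twirl_apply, diagonal_apply_ne _ h]

lemma trace_mpow (n : ℕ) (ρ : Matrix (Fin 2) (Fin 2) ℂ) : (mpow n ρ).trace = ρ.trace ^ n := by
  simp only [trace, diag, mpow, of_apply]
  rw [← Fintype.prod_sum (fun (_ : Fin n) (j : Fin 2) => ρ j j), Finset.prod_const,
    Finset.card_univ, Fintype.card_fin]

lemma mpow_apply_const (n : ℕ) (ρ : Matrix (Fin 2) (Fin 2) ℂ) (v : Fin 2) :
    mpow n ρ (fun _ => v) (fun _ => v) = ρ v v ^ n := by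
  simp [mpow, Finset.prod_const]

lemma mpow_single (n : ℕ) (v : Fin 2) :
    mpow n (single v v 1) = single (fun _ => v) (fun _ => v) 1 := by
  ext x y
  simp only [mpow, of_apply, single_apply, Finset.prod_boole, funext_iff, forall_and]
  simp

lemma projv_single (v : Fin 2) : projv (Pi.single v 1) = single v v 1 := by
  rw [single_eq_single_vecMulVec_single, projv, ← Pi.single_star, star_one]

lemma twirl_mpow_projv_single (n : ℕ) (v : Fin 2) :
    twirl (mpow n (projv (Pi.single v 1))) = single (fun _ => v) (fun _ => v) 1 := by
  rw [projv_single, mpow_single, ← diagonal_single, twirl_diagonal]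

lemma trace_mul_one_sub_single {ι R : Type*} [Fintype ι] [DecidableEq ι] [Ring R]
    (X : Matrix ι ι R) (c : ι) : (X * (1 - single c c 1)).trace = X.trace - X c c := by
  simp [mul_sub, trace_sub, trace_mul_single]

lemma posSemidef_single_one {ι : Type*} [Fintype ι] [DecidableEq ι] (c : ι) :
    (single c c (1 : ℂ)).PosSemidef := by
  rw [← diagonal_single]
  exact .diagonal (Pi.single_nonneg.mpr zero_le_one)

lemma posSemidef_one_sub_single {ι : Type*} [Fintype ι] [DecidableEq ι] (c : ι) :
    (1 - single c c (1 : ℂ)).PosSemidef := by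
  rw [← diagonal_single, ← diagonal_one, diagonal_sub]
  refine PosSemidef.diagonal fun x => ?_
  by_cases h : x = c <;> simp [h]

theorem isLeast_errSet_basis (n : ℕ) (ρ0 : Matrix (Fin 2) (Fin 2) ℂ) (v : Fin 2) {ε : ℝ}
    (hε : 1 - ε ≤ (ρ0.trace ^ n - ρ0 v v ^ n).re) :
    IsLeast (errSet n (twirl (mpow n ρ0)) (twirl (mpow n (projv (Pi.single v 1)))) ε) 0 := by
  set c : Fin n → Fin 2 := fun _ => v
  rw [twirl_mpow_projv_single]
  have hE := posSemidef_one_sub_single c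
  have hOneSubE : (1 - (1 - single c c (1 : ℂ))).PosSemidef := by
    rw [sub_sub_cancel]; exact posSemidef_single_one c
  refine ⟨⟨1 - single c c 1, hE.isHermitian, hE, hOneSubE, ?_, ?_⟩, ?_⟩
  · rwa [trace_mul_one_sub_single, trace_twirl, twirl_apply_self, trace_mpow, mpow_apply_const]
  · rw [trace_mul_one_sub_single, trace_single_eq_same, single_apply_same, sub_self, zero_re]
  · rintro _ ⟨F, -, hF, -, -, rfl⟩
    rw [trace_single_mul, one_smul]
    exact (Complex.nonneg_iff.mp (hF.diag_nonneg (i := c))).1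

lemma ket0_eq_single : ket0 = Pi.single 0 1 := by
  ext a; fin_cases a <;> rfl

lemma ket1_eq_single : ket1 = Pi.single 1 1 := by
  ext a; fin_cases a <;> rfl

lemma projv_qubitR_apply_zero {p : ℝ} (hp : 0 ≤ p) : projv (qubitR p) 0 0 = p := by
  simp [projv, qubitR, ← ofReal_mul, Real.mul_self_sqrt hp]

lemma projv_qubitR_apply_one {p : ℝ} (hp : p ≤ 1) : projv (qubitR p) 1 1 = (1 - p : ℝ) := by
  simp [projv, qubitR, ← ofReal_mul, Real.mul_self_sqrt (sub_nonneg.mpr hp)]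

lemma trace_projv_qubitR {p : ℝ} (hp : p ∈ Icc (0 : ℝ) 1) : (projv (qubitR p)).trace = 1 := by
  rw [trace_fin_two, projv_qubitR_apply_zero hp.1, projv_qubitR_apply_one hp.2]
  push_cast
  ring

theorem typeII_error_vanishes_basis_alt (p : ℝ) (hp : p ∈ Set.Ioo (0 : ℝ) 1)
    (ψ1 : Fin 2 → ℂ) (h1 : ψ1 = ket0 ∨ ψ1 = ket1) :
    ∀ ε ∈ Set.Ioo (0 : ℝ) 1, ∃ nε : ℕ, ∀ n : ℕ, nε ≤ n →
      sInf (errSet n (twirl (mpow n (projv (qubitR p)))) (twirl (mpow n (projv ψ1))) ε)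
        = 0 := by
  intro ε hε
  obtain ⟨v, q, rfl, hq0, hq1, hqv⟩ : ∃ (v : Fin 2) (q : ℝ), ψ1 = Pi.single v 1 ∧ 0 ≤ q ∧ q < 1 ∧
      projv (qubitR p) v v = q := by
    rcases h1 with rfl | rfl
    · exact ⟨0, p, ket0_eq_single, hp.1.le, hp.2, projv_qubitR_apply_zero hp.1.le⟩
    · exact ⟨1, 1 - p, ket1_eq_single, by linarith [hp.2], by linarith [hp.1],
        projv_qubitR_apply_one hp.2.le⟩
  obtain ⟨N, hN⟩ := exists_pow_lt_of_lt_one hε.1 hq1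
  refine ⟨N, fun n hn => (isLeast_errSet_basis n _ v ?_).csInf_eq⟩
  rw [trace_projv_qubitR (Ioo_subset_Icc_self hp), hqv, one_pow, ← ofReal_pow, sub_re, one_re,
    ofReal_re]
  linarith [pow_le_pow_of_le_one hq0 hq1.le hn]
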